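/- If a finite meet-semilattice S contains exactly three upper-bounded two-element antichains, {a₁, b}, {a₂, b}, {a₃, b}, with a common join v = a₁∨b = a₂∨b = a₃∨b and a₁ < a₂ < a₃, then S is a quasi-tree semilattice with nucleus N₆ = {u, a₁, a₂, a₃, b, v}, where u = a₁∧b = a₂∧b = a₃∧b. -/

import Mathlib

def IsMeetCong {α : Type*} [SemilatticeInf α] (s : Setoid α) : Prop :=
  ∀ a b c d : α, s.r a b → s.r c d → s.r (a ⊓ c) (b ⊓ d)

noncomputable def numCong (α : Type*) [SemilatticeInf α] : ℕ :=
  Nat.card {s : Setoid α // IsMeetCong s}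

def IsUbta {α : Type*} [SemilatticeInf α] [OrderBot α] (x y : α) : Prop :=
  x ≠ ⊥ ∧ y ≠ ⊥ ∧ ¬ x ≤ y ∧ ¬ y ≤ x ∧ ∃ z, x ≤ z ∧ y ≤ z

def treeCong (α : Type*) [SemilatticeInf α] [OrderBot α] : Setoid α :=
  sInf {s : Setoid α | IsMeetCong s ∧
    ∀ a b v : α, IsUbta a b → IsLUB {a, b} v → s.r (a ⊓ b) v}

def IsNucleus {α : Type*} [SemilatticeInf α] [OrderBot α] (X : Set α) : Prop :=
  (∃ x ∈ X, ∃ y ∈ X, x ≠ y) ∧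
  (∀ x ∈ X, ∀ y, y ∈ X ↔ (treeCong α).r x y) ∧
  (∀ a b : α, (treeCong α).r a b → a ≠ b → a ∈ X)

def IsQuasiTree (α : Type*) [SemilatticeInf α] [OrderBot α] : Prop :=
  ∃ X : Set α, IsNucleus X

/-!
If every ubta of `S` has the same meet `u` and the same join `v`, then every element with an upper
bound in common with `u` is comparable with `u`. Hence meeting with an element of `[u, v]` either
stays in `[u, v]` or yields `x ⊓ u`, so collapsing `[u, v]` to one block is a meet congruence. It
identifies each ubta meet with its join, and any such congruence must collapse `[u, v]`; thus it is
the tree congruence and `[u, v]` is the nucleus.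

With the three ubtas `{aᵢ, b}`: if `a < a'` then `a' ⊓ b ≤ a`, since otherwise `{a' ⊓ b, a}`
would be a fourth ubta. So the three meets agree, and every element of `[u, v]` other than `u`
and `v` forms a ubta with `b` or with `a₃`, so it is one of `a₁, a₂, a₃, b`.
-/

open Set

def blockSetoid {α : Type*} (X : Set α) : Setoid α where
  r x y := x = y ∨ x ∈ X ∧ y ∈ X
  iseqv := by
    refine ⟨fun _ => Or.inl rfl, ?_, ?_⟩
    · rintro x y (rfl | ⟨hx, hy⟩)
      exacts [Or.inl rfl, Or.inr ⟨hy, hx⟩]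
    · rintro x y z (rfl | ⟨hx, hy⟩) (rfl | ⟨hy', hz⟩)
      exacts [Or.inl rfl, Or.inr ⟨hy', hz⟩, Or.inr ⟨hx, hy⟩, Or.inr ⟨hx, hz⟩]

section SemilatticeInf

variable {α : Type*} [SemilatticeInf α]

theorem blockSetoid_Icc_inf_left {u v x z w : α} (hcomp : ∀ c ≤ v, c ≤ u ∨ u ≤ c)
    (hz : z ∈ Icc u v) (hw : w ∈ Icc u v) : (blockSetoid (Icc u v)).r (x ⊓ z) (x ⊓ w) := by
  by_cases hux : u ≤ x
  · exact Or.inr ⟨⟨le_inf hux hz.1, inf_le_right.trans hz.2⟩,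
      ⟨le_inf hux hw.1, inf_le_right.trans hw.2⟩⟩
  · have hmeet : ∀ t ∈ Icc u v, x ⊓ t = x ⊓ u := fun t ht =>
      le_antisymm
        (le_inf inf_le_left <| (hcomp _ (inf_le_right.trans ht.2)).resolve_right
          fun h => hux (h.trans inf_le_left))
        (inf_le_inf_left x ht.1)
    exact Or.inl ((hmeet z hz).trans (hmeet w hw).symm)

theorem isMeetCong_blockSetoid_Icc {u v : α} (hcomp : ∀ c ≤ v, c ≤ u ∨ u ≤ c) :
    IsMeetCong (blockSetoid (Icc u v)) := by
  intro p q r s hpq hrs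
  have hleft : (blockSetoid (Icc u v)).r (p ⊓ r) (q ⊓ r) := by
    rcases hpq with rfl | ⟨hp, hq⟩
    · exact Or.inl rfl
    · rw [inf_comm p, inf_comm q]
      exact blockSetoid_Icc_inf_left hcomp hp hq
  have hright : (blockSetoid (Icc u v)).r (q ⊓ r) (q ⊓ s) := by
    rcases hrs with rfl | ⟨hr, hs⟩
    · exact Or.inl rfl
    · exact blockSetoid_Icc_inf_left hcomp hr hs
  exact (blockSetoid _).trans' hleft hright

theorem IsMeetCong.rel_of_mem_Icc {s : Setoid α} (hs : IsMeetCong s) {u v t : α}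
    (huv : s.r u v) (ht : t ∈ Icc u v) : s.r u t := by
  simpa [inf_eq_left.2 ht.1, inf_eq_right.2 ht.2] using hs u v t t huv (s.refl' t)

end SemilatticeInf

section OrderBot

variable {α : Type*} [SemilatticeInf α] [OrderBot α]

theorem IsUbta.symm {x y : α} (h : IsUbta x y) : IsUbta y x :=
  let ⟨hx, hy, hxy, hyx, z, hxz, hyz⟩ := h
  ⟨hy, hx, hyx, hxy, z, hyz, hxz⟩

theorem IsUbta.mem_Icc {u v x y : α}
    (hubta : ∀ a b, IsUbta a b → a ⊓ b = u ∧ IsLUB {a, b} v) (h : IsUbta x y) :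
    x ∈ Icc u v := by
  obtain ⟨rfl, hv⟩ := hubta x y h
  exact ⟨inf_le_left, hv.1 (mem_insert x _)⟩

theorem le_or_le_of_forall_isUbta_inf_eq {u v c : α} (hubta : ∀ a b, IsUbta a b → a ⊓ b = u)
    (hcv : c ≤ v) (huv : u ≤ v) : c ≤ u ∨ u ≤ c := by
  by_contra! h
  obtain ⟨hcu, huc⟩ := h
  have hmeet := hubta c u ⟨fun h => hcu (h ▸ bot_le), fun h => huc (h ▸ bot_le), hcu, huc,
    v, hcv, huv⟩
  exact huc (hmeet ▸ inf_le_left)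

theorem treeCong_eq_blockSetoid_Icc {u v : α} (hex : ∃ a b : α, IsUbta a b)
    (hubta : ∀ a b, IsUbta a b → a ⊓ b = u ∧ IsLUB {a, b} v) :
    treeCong α = blockSetoid (Icc u v) := by
  obtain ⟨a, b, hab⟩ := hex
  obtain ⟨rfl, hv⟩ := hubta a b hab
  have huv : a ⊓ b ≤ v := inf_le_left.trans (hv.1 (mem_insert a _))
  apply le_antisymm
  · refine sInf_le ⟨isMeetCong_blockSetoid_Icc fun c hc =>
      le_or_le_of_forall_isUbta_inf_eq (fun x y h => (hubta x y h).1) hc huv, ?_⟩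
    intro x y w hxy hw
    obtain ⟨hmeet, hjoin⟩ := hubta x y hxy
    rw [hmeet, hw.unique hjoin]
    exact Or.inr ⟨left_mem_Icc.2 huv, right_mem_Icc.2 huv⟩
  · refine le_sInf fun s ⟨hs, hs'⟩ => Setoid.le_def.2 ?_
    rintro x y (rfl | ⟨hx, hy⟩)
    · exact s.refl' x
    · have hsuv := hs' a b v hab hv
      exact s.trans' (s.symm' (hs.rel_of_mem_Icc hsuv hx)) (hs.rel_of_mem_Icc hsuv hy)

theorem isNucleus_of_treeCong_eq_blockSetoid {X : Set α} (hX : X.Nontrivial)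
    (h : treeCong α = blockSetoid X) : IsNucleus X := by
  refine ⟨hX, fun x hx y => ?_, fun a b hab hne => ?_⟩
  · rw [h]
    exact ⟨fun hy => Or.inr ⟨hx, hy⟩, by rintro (rfl | ⟨-, hy⟩) <;> assumption⟩
  · rw [h] at hab
    exact hab.resolve_left hne |>.1

theorem isNucleus_Icc {u v : α} (hex : ∃ a b : α, IsUbta a b)
    (hubta : ∀ a b, IsUbta a b → a ⊓ b = u ∧ IsLUB {a, b} v) : IsNucleus (Icc u v) := by
  refine isNucleus_of_treeCong_eq_blockSetoid ?_ (treeCong_eq_blockSetoid_Icc hex hubta)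
  obtain ⟨a, b, hab⟩ := hex
  obtain ⟨rfl, hv⟩ := hubta a b hab
  have hav : a ≤ v := hv.1 (mem_insert a _)
  refine ⟨a ⊓ b, left_mem_Icc.2 (inf_le_left.trans hav), v, right_mem_Icc.2 (inf_le_left.trans hav),
    fun h => hab.2.2.1 ?_⟩
  calc a ≤ v := hav
    _ = a ⊓ b := h.symm
    _ ≤ b := inf_le_right

theorem inf_eq_inf_of_forall_isUbta_mem {P : Set α} (hP : ∀ x y, IsUbta x y → x ∈ P)
    {a a' b : α} (ha : a ≠ ⊥) (hab : ¬ a ≤ b) (haa' : a ≤ a') (hP' : a' ⊓ b ∉ P) :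
    a ⊓ b = a' ⊓ b := by
  refine le_antisymm (inf_le_inf_right b haa') (le_inf ?_ inf_le_right)
  by_contra h
  exact hP' <| hP _ a ⟨fun h0 => h (h0 ▸ bot_le), ha, h,
    fun h' => hab (h'.trans inf_le_right), a', inf_le_left, haa'⟩

theorem mem_of_mem_Icc_inf_of_forall_isUbta_mem {P : Set α} (hP : ∀ x y, IsUbta x y → x ∈ P)
    {a b v c : α} (hab : IsUbta a b) (hv : IsLUB {a, b} v) (hc : c ∈ Icc (a ⊓ b) v) :
    c = a ⊓ b ∨ c = v ∨ c ∈ P := by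
  obtain ⟨ha0, hb0, hab', hba, -⟩ := hab
  by_cases hcu : c = a ⊓ b
  · exact Or.inl hcu
  have hc0 : c ≠ ⊥ := fun h => hcu (le_antisymm (h ▸ bot_le) hc.1)
  have hcomp : ∀ x ≤ v, x ≠ ⊥ → c ≤ x ∨ x ≤ c ∨ c ∈ P := fun x hxv hx0 => by
    by_contra! h
    exact h.2.2 (hP c x ⟨hc0, hx0, h.1, h.2.1, v, hc.2, hxv⟩)
  rcases hcomp a (hv.1 (mem_insert a _)) ha0 with hca | hac | hcP <;>
    rcases hcomp b (hv.1 (mem_insert_of_mem a rfl)) hb0 with hcb | hbc | hcP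
  · exact absurd (le_antisymm (le_inf hca hcb) hc.1) hcu
  · exact absurd (hbc.trans hca) hba
  · exact Or.inr (Or.inr hcP)
  · exact absurd (hac.trans hcb) hab'
  · exact Or.inr (Or.inl (le_antisymm hc.2 (hv.2 (by simp [upperBounds, hac, hbc]))))
  all_goals exact Or.inr (Or.inr hcP)

theorem Icc_inf_eq_of_forall_isUbta_mem {P : Set α} (hP : ∀ x y, IsUbta x y → x ∈ P)
    {a b v : α} (hab : IsUbta a b) (hv : IsLUB {a, b} v) (hPIcc : P ⊆ Icc (a ⊓ b) v) :
    Icc (a ⊓ b) v = insert (a ⊓ b) (insert v P) := by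
  have huv : a ⊓ b ≤ v := inf_le_left.trans (hv.1 (mem_insert a _))
  refine subset_antisymm (fun c hc => ?_) ?_
  · exact mem_of_mem_Icc_inf_of_forall_isUbta_mem hP hab hv hc
  · exact insert_subset (left_mem_Icc.2 huv) (insert_subset (right_mem_Icc.2 huv) hPIcc)

theorem mem_of_isUbta_of_forall_pair_eq {a₁ a₂ a₃ b : α}
    (huniq : ∀ x y : α, IsUbta x y → ({x, y} : Set α) = {a₁, b} ∨
      ({x, y} : Set α) = {a₂, b} ∨ ({x, y} : Set α) = {a₃, b})
    {x y : α} (hxy : IsUbta x y) : x ∈ ({a₁, a₂, a₃, b} : Set α) := by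
  have hx : x ∈ ({x, y} : Set α) := mem_insert x {y}
  rcases huniq x y hxy with h | h | h <;> rw [h] at hx <;> rcases hx with rfl | rfl <;> simp

end OrderBot

theorem inf_eq_inf_of_pair_eq {α : Type*} [SemilatticeInf α] {x y p q : α}
    (h : ({x, y} : Set α) = {p, q}) : x ⊓ y = p ⊓ q := by
  rcases Set.pair_eq_pair_iff.1 h with ⟨rfl, rfl⟩ | ⟨rfl, rfl⟩
  exacts [rfl, inf_comm _ _]

theorem threeUbta_N6_general {α : Type*} [SemilatticeInf α] [OrderBot α]
    (a₁ a₂ a₃ b v : α)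
    (h1 : IsUbta a₁ b) (h2 : IsUbta a₂ b) (h3 : IsUbta a₃ b)
    (hv1 : IsLUB {a₁, b} v) (hv2 : IsLUB {a₂, b} v) (hv3 : IsLUB {a₃, b} v)
    (h12 : a₁ < a₂) (h23 : a₂ < a₃)
    (huniq : ∀ x y : α, IsUbta x y → ({x, y} : Set α) = {a₁, b} ∨
      ({x, y} : Set α) = {a₂, b} ∨ ({x, y} : Set α) = {a₃, b}) :
    a₁ ⊓ b = a₂ ⊓ b ∧ a₂ ⊓ b = a₃ ⊓ b ∧
      IsNucleus ({a₁ ⊓ b, a₁, a₂, a₃, b, v} : Set α) := by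
  set P : Set α := {a₁, a₂, a₃, b}
  have hP : ∀ x y, IsUbta x y → x ∈ P := fun _ _ => mem_of_isUbta_of_forall_pair_eq huniq
  have hinf_notMem : ∀ a, ¬ b ≤ a → a ⊓ b ∉ P := by
    rintro a hba (h | h | h | h)
    exacts [h1.2.2.1 (h ▸ inf_le_right), h2.2.2.1 (h ▸ inf_le_right),
      h3.2.2.1 (h ▸ inf_le_right), hba (h ▸ inf_le_left)]
  have eq12 := inf_eq_inf_of_forall_isUbta_mem hP h1.1 h1.2.2.1 h12.le (hinf_notMem a₂ h2.2.2.2.1)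
  have eq23 := inf_eq_inf_of_forall_isUbta_mem hP h2.1 h2.2.2.1 h23.le (hinf_notMem a₃ h3.2.2.2.1)
  have hubta : ∀ x y, IsUbta x y → x ⊓ y = a₁ ⊓ b ∧ IsLUB {x, y} v := by
    intro x y hxy
    rcases huniq x y hxy with h | h | h <;> rw [inf_eq_inf_of_pair_eq h, h]
    exacts [⟨rfl, hv1⟩, ⟨eq12.symm, hv2⟩, ⟨(eq12.trans eq23).symm, hv3⟩]
  have hPIcc : P ⊆ Icc (a₁ ⊓ b) v := by
    rintro p (rfl | rfl | rfl | rfl)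
    exacts [h1.mem_Icc hubta, h2.mem_Icc hubta, h3.mem_Icc hubta, h1.symm.mem_Icc hubta]
  have hIcc : Icc (a₁ ⊓ b) v = {a₁ ⊓ b, a₁, a₂, a₃, b, v} := by
    rw [eq12, eq23] at hPIcc ⊢
    rw [Icc_inf_eq_of_forall_isUbta_mem hP h3 hv3 hPIcc]
    ext c
    simp only [P, mem_insert_iff, mem_singleton_iff]
    tauto
  exact ⟨eq12, eq23, hIcc ▸ isNucleus_Icc ⟨a₁, b, h1⟩ hubta⟩

/-- A finite meet-semilattice with exactly three ubtas {a₁, b}, {a₂, b},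
{a₃, b}, with common join v and a₁ < a₂ < a₃, is a quasi-tree semilattice with
nucleus N₆ = {u, a₁, a₂, a₃, b, v}, where u = a₁⊓b = a₂⊓b = a₃⊓b. -/
theorem threeUbta_N6 {α : Type*} [SemilatticeInf α] [OrderBot α] [Fintype α]
    (a₁ a₂ a₃ b v : α)
    (h1 : IsUbta a₁ b) (h2 : IsUbta a₂ b) (h3 : IsUbta a₃ b)
    (hv1 : IsLUB {a₁, b} v) (hv2 : IsLUB {a₂, b} v) (hv3 : IsLUB {a₃, b} v)
    (h12 : a₁ < a₂) (h23 : a₂ < a₃)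
    (huniq : ∀ x y : α, IsUbta x y → ({x, y} : Set α) = {a₁, b} ∨
      ({x, y} : Set α) = {a₂, b} ∨ ({x, y} : Set α) = {a₃, b}) :
    a₁ ⊓ b = a₂ ⊓ b ∧ a₂ ⊓ b = a₃ ⊓ b ∧
      IsNucleus ({a₁ ⊓ b, a₁, a₂, a₃, b, v} : Set α) :=
  threeUbta_N6_general a₁ a₂ a₃ b v h1 h2 h3 hv1 hv2 hv3 h12 h23 huniq
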